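/- arXiv:1406.2827 — 3 statements merged into one kernel-verified Lean document; each statement's English description precedes it below -/
import Mathlib

section
/- Let ζ = (1+√3·i)/2 ∈ ℂ. For all integers a ≥ b ≥ 0, the combinatorial length of a+bζ in ℤ[ζ] equals a+b; that is, a+bζ can be written as a sum of a+b sixth roots of unity, and it cannot be written as a sum of fewer sixth roots of unity. -/
/-! The ℝ-linear functional `φ = zeta6Weight` on `ℂ` with `φ 1 = φ ζ = 1` takes the value `a + b` at `a + bζ`
and is at most `1` on every sixth root of unity, because the powers of `ζ` are the six
points `p + qζ` of the hexagon `max (|p|, |q|, |p + q|) = 1`. Hence `a + bζ` is not a sum of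
fewer than `a + b` sixth roots of unity, while `a` copies of `1` and `b` copies of `ζ` give it. -/

/-- ζ = (1+√3·i)/2, a primitive sixth root of unity. -/
noncomputable def zeta6 : ℂ := (1 + Real.sqrt 3 * Complex.I) / 2

def IsSumOfRootsOfUnity (m n : ℕ) (z : ℂ) : Prop :=
  ∃ f : Fin n → ℂ, (∀ k, f k ^ m = 1) ∧ z = ∑ k, f k

namespace IsSumOfRootsOfUnity

variable {m n n' : ℕ} {z w : ℂ}

theorem add (hz : IsSumOfRootsOfUnity m n z) (hw : IsSumOfRootsOfUnity m n' w) :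
    IsSumOfRootsOfUnity m (n + n') (z + w) := by
  obtain ⟨f, hf, rfl⟩ := hz
  obtain ⟨g, hg, rfl⟩ := hw
  refine ⟨Fin.append f g, fun k => ?_, by simp [Fin.sum_univ_add]⟩
  cases k using Fin.addCases <;> simp [hf, hg]

theorem natCast_mul {u : ℂ} (hu : u ^ m = 1) (n : ℕ) :
    IsSumOfRootsOfUnity m n (n * u) :=
  ⟨fun _ => u, fun _ => hu, by simp⟩

theorem le_of_forall_pow_eq_one (φ : ℂ →ₗ[ℝ] ℝ) (hφ : ∀ u : ℂ, u ^ m = 1 → φ u ≤ 1)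
    (h : IsSumOfRootsOfUnity m n z) : φ z ≤ n := by
  obtain ⟨f, hf, rfl⟩ := h
  calc φ (∑ k, f k) = ∑ k, φ (f k) := map_sum φ f _
    _ ≤ ∑ _k : Fin n, (1 : ℝ) := Finset.sum_le_sum fun k _ => hφ (f k) (hf k)
    _ = n := by simp

end IsSumOfRootsOfUnity

theorem zeta6_eq_exp : zeta6 = Complex.exp (2 * Real.pi * Complex.I / (6 : ℕ)) := by
  have h : 2 * Real.pi * Complex.I / (6 : ℕ) = ((Real.pi / 3 : ℝ) : ℂ) * Complex.I := by
    push_cast; ring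
  rw [h, Complex.exp_mul_I, ← Complex.ofReal_cos, ← Complex.ofReal_sin, Real.cos_pi_div_three,
    Real.sin_pi_div_three, zeta6]
  push_cast; ring

theorem isPrimitiveRoot_zeta6 : IsPrimitiveRoot zeta6 6 :=
  zeta6_eq_exp ▸ Complex.isPrimitiveRoot_exp 6 (by norm_num)

theorem zeta6_sq : zeta6 ^ 2 = zeta6 - 1 := by
  have hs : (Real.sqrt 3 : ℂ) ^ 2 = 3 := by exact_mod_cast Real.sq_sqrt (by norm_num : (0 : ℝ) ≤ 3)
  unfold zeta6
  linear_combination (Complex.I ^ 2 / 4) * hs + (3 / 4) * Complex.I_sq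

/-- Multiplication by `ζ` maps `p + qζ` to `-q + (p + q)ζ`, which preserves the hexagon. -/
theorem exists_zeta6_pow_eq (i : ℕ) :
    ∃ p q : ℤ, |p| ≤ 1 ∧ |q| ≤ 1 ∧ |p + q| ≤ 1 ∧ zeta6 ^ i = p + q * zeta6 := by
  induction i with
  | zero => exact ⟨1, 0, by simp⟩
  | succ i ih =>
    obtain ⟨p, q, hp, hq, hpq, hi⟩ := ih
    refine ⟨-q, p + q, by rwa [abs_neg], hpq, by simpa using hp, ?_⟩
    rw [pow_succ, hi]
    push_cast
    linear_combination q * zeta6_sq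

noncomputable def zeta6Weight : ℂ →ₗ[ℝ] ℝ :=
  Complex.reLm + (Real.sqrt 3)⁻¹ • Complex.imLm

theorem zeta6Weight_intCast_add_mul (p q : ℤ) : zeta6Weight (p + q * zeta6) = p + q := by
  have hs : Real.sqrt 3 ≠ 0 := by positivity
  simp [zeta6Weight, zeta6]
  field_simp
  ring

theorem zeta6Weight_le_one_of_pow_eq_one {u : ℂ} (hu : u ^ 6 = 1) : zeta6Weight u ≤ 1 := by
  obtain ⟨i, -, rfl⟩ := isPrimitiveRoot_zeta6.eq_pow_of_pow_eq_one hu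
  obtain ⟨p, q, -, -, hpq, hi⟩ := exists_zeta6_pow_eq i
  rw [hi, zeta6Weight_intCast_add_mul]
  exact_mod_cast (abs_le.mp hpq).2

/-- for integers a ≥ b ≥ 0, the combinatorial length of a+bζ in the
Eisenstein integers is a+b: `a+b` is the least number n such that a+bζ is a sum
of n sixth roots of unity. -/
theorem combLength_eisenstein_canonical (a b : ℤ) (hab : b ≤ a) (hb : 0 ≤ b) :
    IsLeast {n : ℕ | ∃ f : Fin n → ℂ, (∀ k, (f k) ^ 6 = 1) ∧
      (a : ℂ) + (b : ℂ) * zeta6 = ∑ k, f k} (a + b).toNat := by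
  lift a to ℕ using hb.trans hab
  lift b to ℕ using hb
  rw [← Nat.cast_add, Int.toNat_natCast]
  constructor
  · have h := (IsSumOfRootsOfUnity.natCast_mul (one_pow 6) a).add
      (IsSumOfRootsOfUnity.natCast_mul (isPrimitiveRoot_zeta6.pow_eq_one) b)
    simpa [IsSumOfRootsOfUnity] using h
  · intro n hn
    have h := IsSumOfRootsOfUnity.le_of_forall_pow_eq_one zeta6Weight
      (fun _ => zeta6Weight_le_one_of_pow_eq_one) hn
    rw [← Int.cast_natCast a, ← Int.cast_natCast b, zeta6Weight_intCast_add_mul] at h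
    exact Nat.cast_le.mp (by push_cast at h ⊢; exact h)
end

section
/- Let M be a normal subgroup of the group GL(2, ℤ[i]) of invertible 2×2 matrices over the Gaussian integers. Then the set {w ∈ ℤ[i] : the matrix with rows (1, w) and (0, 1) belongs to M} is an ideal of ℤ[i]. -/
/-!
Since `w ↦ p_w` is a homomorphism from `(R, +)` to `GL(2, R)`, the set `{w | p_w ∈ M}` is an
additive subgroup of `R`; conjugating by `diag(u, 1)` turns `p_w` into `p_{u w}`, so for a normal
`M` it is stable under multiplication by units. In `ℤ[i]` every element is an integral combination
of the units `1` and `i`, so such an additive subgroup is an ideal.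
-/

/-- The upper unitriangular matrix p_w with rows (1, w) and (0, 1), as an
element of GL(2, R). -/
def pGL {R : Type*} [CommRing R] (w : R) : GL (Fin 2) R :=
  ⟨!![1, w; 0, 1], !![1, -w; 0, 1],
    by ext i j; fin_cases i <;> fin_cases j <;>
      simp [Matrix.mul_apply, Fin.sum_univ_two, Matrix.one_apply],
    by ext i j; fin_cases i <;> fin_cases j <;>
      simp [Matrix.mul_apply, Fin.sum_univ_two, Matrix.one_apply]⟩

section CommRing

variable {R : Type*} [CommRing R]

lemma pGL_add (w w' : R) : pGL (w + w') = pGL w * pGL w' := by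
  ext i j
  fin_cases i <;> fin_cases j <;> simp [pGL, Matrix.mul_apply, Fin.sum_univ_two, add_comm]

lemma pGL_zero : pGL (0 : R) = 1 := by
  ext i j
  fin_cases i <;> fin_cases j <;> simp [pGL]

lemma pGL_neg (w : R) : pGL (-w) = (pGL w)⁻¹ := by
  rw [eq_inv_iff_mul_eq_one, ← pGL_add, neg_add_cancel, pGL_zero]

def diagUnitOneGL (u : Rˣ) : GL (Fin 2) R :=
  ⟨!![(u : R), 0; 0, 1], !![(↑u⁻¹ : R), 0; 0, 1],
    by ext i j; fin_cases i <;> fin_cases j <;> simp,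
    by ext i j; fin_cases i <;> fin_cases j <;> simp⟩

lemma diagUnitOneGL_mul_pGL_mul_inv (u : Rˣ) (w : R) :
    diagUnitOneGL u * pGL w * (diagUnitOneGL u)⁻¹ = pGL (u * w) := by
  rw [mul_inv_eq_iff_eq_mul]
  ext i j
  fin_cases i <;> fin_cases j <;>
    simp [pGL, diagUnitOneGL, Matrix.mul_apply, Fin.sum_univ_two, mul_comm]

def pGLAddSubgroup (M : Subgroup (GL (Fin 2) R)) : AddSubgroup R where
  carrier := {w | pGL w ∈ M}
  add_mem' {a b} ha hb := by
    simpa only [Set.mem_ofPred_eq, pGL_add] using M.mul_mem ha hb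
  zero_mem' := by simpa only [Set.mem_ofPred_eq, pGL_zero] using M.one_mem
  neg_mem' {a} ha := by simpa only [Set.mem_ofPred_eq, pGL_neg] using M.inv_mem ha

lemma mem_pGLAddSubgroup {M : Subgroup (GL (Fin 2) R)} {w : R} :
    w ∈ pGLAddSubgroup M ↔ pGL w ∈ M :=
  Iff.rfl

lemma units_mul_mem_pGLAddSubgroup {M : Subgroup (GL (Fin 2) R)} (hM : M.Normal) (u : Rˣ)
    {w : R} (hw : w ∈ pGLAddSubgroup M) : ↑u * w ∈ pGLAddSubgroup M := by
  rw [mem_pGLAddSubgroup, ← diagUnitOneGL_mul_pGL_mul_inv]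
  exact hM.conj_mem _ hw _

lemma AddSubgroup.mul_mem_of_units_mul_mem
    (hR : AddSubgroup.closure (Set.range ((↑) : Rˣ → R)) = ⊤) {S : AddSubgroup R}
    (hS : ∀ (u : Rˣ) {w : R}, w ∈ S → ↑u * w ∈ S) (c : R) {w : R} (hw : w ∈ S) :
    c * w ∈ S := by
  have hc : c ∈ AddSubgroup.closure (Set.range ((↑) : Rˣ → R)) := hR ▸ AddSubgroup.mem_top c
  induction hc using AddSubgroup.closure_induction with
  | mem _ hx => obtain ⟨u, rfl⟩ := hx; exact hS u hw
  | zero => simpa only [zero_mul] using S.zero_mem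
  | add _ _ _ _ hx hy => simpa only [add_mul] using S.add_mem hx hy
  | neg _ _ hx => simpa only [neg_mul] using S.neg_mem hx

def AddSubgroup.toIdealOfUnitsMulMem
    (hR : AddSubgroup.closure (Set.range ((↑) : Rˣ → R)) = ⊤) (S : AddSubgroup R)
    (hS : ∀ (u : Rˣ) {w : R}, w ∈ S → ↑u * w ∈ S) : Ideal R where
  __ := S
  smul_mem' c _ hw := S.mul_mem_of_units_mul_mem hR hS c hw

end CommRing

def GaussianInt.unitI : GaussianInt ˣ :=
  ⟨Zsqrtd.sqrtd, -Zsqrtd.sqrtd, by ext <;> simp, by ext <;> simp⟩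

lemma GaussianInt.addSubgroupClosure_units_eq_top :
    AddSubgroup.closure (Set.range ((↑) : GaussianInt ˣ → GaussianInt)) = ⊤ := by
  refine eq_top_iff.mpr fun c _ => ?_
  have hc : c = c.re • (1 : GaussianInt ˣ).val + c.im • GaussianInt.unitI.val := by
    ext <;> simp [GaussianInt.unitI]
  rw [hc]
  exact add_mem (zsmul_mem (AddSubgroup.subset_closure (Set.mem_range_self _)) _)
    (zsmul_mem (AddSubgroup.subset_closure (Set.mem_range_self _)) _)

/-- for a normal subgroup M of GL(2, ℤ[i]), the set
{w ∈ ℤ[i] : p_w ∈ M} is an ideal of ℤ[i]. -/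
theorem pGL_mem_normal_subgroup_isIdeal_gaussian
    (M : Subgroup (GL (Fin 2) GaussianInt)) (hM : M.Normal) :
    ∃ I : Ideal GaussianInt, ∀ w : GaussianInt, w ∈ I ↔ pGL w ∈ M :=
  ⟨(pGLAddSubgroup M).toIdealOfUnitsMulMem GaussianInt.addSubgroupClosure_units_eq_top
      (fun u _ hw => units_mul_mem_pGLAddSubgroup hM u hw),
    fun _ => Iff.rfl⟩
end

section
/- Let p, q be natural numbers, r an even natural number, and a a natural number. Then the assignment P ↦ Q⁻¹P⁻¹Q, Q ↦ Q⁻¹, R ↦ R⁻¹ extends to a well-defined group automorphism μ of the presented group G_{p,q,r}(a,0) = ⟨P, Q, R | P^p, Q^q, R^r, (PQ)², (QR)², (PQR)², (Q R^{r/2+1})^a⟩, and μ is an involution (μ ∘ μ = id). -/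
/-- The relators of the presentation
⟨P, Q, R | P^p, Q^q, R^r, (PQ)², (QR)², (PQR)², (Q R^{r/2+1})^a (R Q R^{r/2})^b⟩
of the orientation-preserving symmetry group of the universal regular
tessellation of type {p,q,r} and cusp modulus a+bu, u = e^{2πi/r}.
The generators P, Q, R are `FreeGroup.of 0`, `FreeGroup.of 1`, `FreeGroup.of 2`. -/
def tessRels (p q r a b : ℕ) : Set (FreeGroup (Fin 3)) :=
  {(FreeGroup.of 0) ^ p, (FreeGroup.of 1) ^ q, (FreeGroup.of 2) ^ r,
   (FreeGroup.of 0 * FreeGroup.of 1) ^ 2,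
   (FreeGroup.of 1 * FreeGroup.of 2) ^ 2,
   (FreeGroup.of 0 * FreeGroup.of 1 * FreeGroup.of 2) ^ 2,
   (FreeGroup.of 1 * (FreeGroup.of 2) ^ (r / 2 + 1)) ^ a *
     (FreeGroup.of 2 * FreeGroup.of 1 * (FreeGroup.of 2) ^ (r / 2)) ^ b}

/-- G_{p,q,r}(a,b), the presented group of the above presentation. -/
def tessGroup (p q r a b : ℕ) : Type := PresentedGroup (tessRels p q r a b)

instance (p q r a b : ℕ) : Group (tessGroup p q r a b) :=
  inferInstanceAs (Group (PresentedGroup _))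

/-- The generators P, Q, R of G_{p,q,r}(a,b), the images of the free generators. -/
def tessGen (p q r a b : ℕ) (i : Fin 3) : tessGroup p q r a b :=
  PresentedGroup.of i

/-!
Under `P ↦ Q⁻¹P⁻¹Q`, `Q ↦ Q⁻¹`, `R ↦ R⁻¹` each defining relator of `G_{p,q,r}(a,0)` is sent to
the inverse of a cyclic rotation of a relator, up to conjugation: with `s = r/2 + 1`, the cusp
relator `(Q R^s)^a` goes to `((R^s Q)^a)⁻¹`, and `R^s Q` is conjugate to `Q R^s`. So the
assignment defines an endomorphism `μ` of the presented group. It squares to the identity on the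
generators (`μ (μ P) = Q (Q⁻¹P⁻¹Q)⁻¹ Q⁻¹ = P`), hence `μ` is an involution and in particular an
automorphism.
-/

section Relations

variable {G : Type*} [Group G] {p q r a b : ℕ} {P Q R : G}

structure SatisfiesTessRels (p q r a b : ℕ) (P Q R : G) : Prop where
  pow_p : P ^ p = 1
  pow_q : Q ^ q = 1
  pow_r : R ^ r = 1
  pq_sq : (P * Q) ^ 2 = 1
  qr_sq : (Q * R) ^ 2 = 1
  pqr_sq : (P * Q * R) ^ 2 = 1
  cusp : (Q * R ^ (r / 2 + 1)) ^ a * (R * Q * R ^ (r / 2)) ^ b = 1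

theorem forall_lift_tessRels_eq_one_iff (f : Fin 3 → G) :
    (∀ w ∈ tessRels p q r a b, FreeGroup.lift f w = 1) ↔
      SatisfiesTessRels p q r a b (f 0) (f 1) (f 2) := by
  simp only [tessRels, Set.mem_insert_iff, Set.mem_singleton_iff, forall_eq_or_imp, forall_eq,
    map_pow, map_mul, FreeGroup.lift_apply_of]
  exact ⟨fun ⟨h₁, h₂, h₃, h₄, h₅, h₆, h₇⟩ => ⟨h₁, h₂, h₃, h₄, h₅, h₆, h₇⟩,
    fun ⟨h₁, h₂, h₃, h₄, h₅, h₆, h₇⟩ => ⟨h₁, h₂, h₃, h₄, h₅, h₆, h₇⟩⟩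

theorem mul_comm_pow_eq_one {x y : G} {n : ℕ} (h : (x * y) ^ n = 1) : (y * x) ^ n = 1 := by
  rw [show y * x = x⁻¹ * (x * y) * x⁻¹⁻¹ by group, conj_pow, h]
  group

theorem SatisfiesTessRels.mirror (h : SatisfiesTessRels p q r a 0 P Q R) :
    SatisfiesTessRels p q r a 0 (Q⁻¹ * P⁻¹ * Q) Q⁻¹ R⁻¹ where
  pow_p := by
    rw [show Q⁻¹ * P⁻¹ * Q = Q⁻¹ * P⁻¹ * Q⁻¹⁻¹ by group, conj_pow, inv_pow, h.pow_p]
    group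
  pow_q := by rw [inv_pow, h.pow_q, inv_one]
  pow_r := by rw [inv_pow, h.pow_r, inv_one]
  pq_sq := by rw [show Q⁻¹ * P⁻¹ * Q * Q⁻¹ = (P * Q)⁻¹ by group, inv_pow, h.pq_sq, inv_one]
  qr_sq := by rw [← mul_inv_rev, inv_pow, mul_comm_pow_eq_one h.qr_sq, inv_one]
  pqr_sq := by
    rw [show Q⁻¹ * P⁻¹ * Q * Q⁻¹ * R⁻¹ = (R * (P * Q))⁻¹ by group, inv_pow,
      mul_comm_pow_eq_one h.pqr_sq, inv_one]
  cusp := by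
    have cusp := h.cusp
    rw [pow_zero, mul_one] at cusp ⊢
    rw [inv_pow R, ← mul_inv_rev, inv_pow, mul_comm_pow_eq_one cusp, inv_one]

def tessLift (h : SatisfiesTessRels p q r a b P Q R) : tessGroup p q r a b →* G :=
  PresentedGroup.toGroup ((forall_lift_tessRels_eq_one_iff ![P, Q, R]).2 h)

theorem tessLift_tessGen (h : SatisfiesTessRels p q r a b P Q R) (i : Fin 3) :
    tessLift h (tessGen p q r a b i) = ![P, Q, R] i :=
  PresentedGroup.toGroup.of _

end Relations

theorem satisfiesTessRels_tessGen (p q r a b : ℕ) :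
    SatisfiesTessRels p q r a b
      (tessGen p q r a b 0) (tessGen p q r a b 1) (tessGen p q r a b 2) := by
  refine (forall_lift_tessRels_eq_one_iff (tessGen p q r a b)).1 fun w hw => ?_
  have lift_tessGen :
      FreeGroup.lift (tessGen p q r a b) = PresentedGroup.mk (tessRels p q r a b) :=
    FreeGroup.ext_hom _ _ fun _ => rfl
  rw [lift_tessGen]
  exact PresentedGroup.one_of_mem hw

theorem tessGroup_mirror_automorphism_general (p q r a : ℕ) :
    ∃ μ : tessGroup p q r a 0 ≃* tessGroup p q r a 0,
      μ (tessGen p q r a 0 0) =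
        (tessGen p q r a 0 1)⁻¹ * (tessGen p q r a 0 0)⁻¹ * tessGen p q r a 0 1 ∧
      μ (tessGen p q r a 0 1) = (tessGen p q r a 0 1)⁻¹ ∧
      μ (tessGen p q r a 0 2) = (tessGen p q r a 0 2)⁻¹ ∧
      ∀ x, μ (μ x) = x := by
  let μ := tessLift (satisfiesTessRels_tessGen p q r a 0).mirror
  have μ_gen := tessLift_tessGen (satisfiesTessRels_tessGen p q r a 0).mirror
  have μ_μ : μ.comp μ = MonoidHom.id _ := PresentedGroup.ext fun i => by
    change μ (μ (tessGen p q r a 0 i)) = tessGen p q r a 0 i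
    fin_cases i <;> simp [μ, μ_gen]
  exact ⟨μ.toMulEquiv μ μ_μ μ_μ, μ_gen 0, μ_gen 1, μ_gen 2, DFunLike.congr_fun μ_μ⟩

/-- for even r, the assignment P ↦ Q⁻¹P⁻¹Q, Q ↦ Q⁻¹, R ↦ R⁻¹
extends to a group automorphism μ of G_{p,q,r}(a,0), and μ is an involution. -/
theorem tessGroup_mirror_automorphism (p q r a : ℕ) (hr : Even r) :
    ∃ μ : tessGroup p q r a 0 ≃* tessGroup p q r a 0,
      μ (tessGen p q r a 0 0) =
        (tessGen p q r a 0 1)⁻¹ * (tessGen p q r a 0 0)⁻¹ * tessGen p q r a 0 1 ∧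
      μ (tessGen p q r a 0 1) = (tessGen p q r a 0 1)⁻¹ ∧
      μ (tessGen p q r a 0 2) = (tessGen p q r a 0 2)⁻¹ ∧
      ∀ x, μ (μ x) = x :=
  tessGroup_mirror_automorphism_general p q r a
end
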